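/- Consider LP1 with n = 2, a = (1,1), d = (1,2), and p = (1/2, 1/2) (i.e., a single additive bidder with two independent items, one uniform on {1,2} and the other uniform on {1,3}). Then LP1 has a unique optimal solution (u, q); its objective value is 21/8; u is given by u({1,2}) = 1 and u(∅) = u({1}) = u({2}) = 0; and q satisfies q(∅) = (0,0), q({1}) = (1, 1/2), q({2}) = (1,1), q({1,2}) = (1,1). In particular q_2({1}) = 1/2, so the unique revenue-optimal mechanism is randomized. -/

import Mathlib

open Finset
open scoped BigOperators Classical

/-- The probability of the set `S` of items having high value. -/
def pmass (n : ℕ) (p : Fin n → ℝ) (S : Finset (Fin n)) : ℝ :=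
  (∏ i ∈ S, p i) * ∏ i ∈ Sᶜ, (1 - p i)

/-- The valuation vector of type `S`: `a i + d i` for `i ∈ S` (high) and `a i` otherwise. -/
def vval (n : ℕ) (a d : Fin n → ℝ) (S : Finset (Fin n)) (i : Fin n) : ℝ :=
  if i ∈ S then a i + d i else a i

/-- Feasibility for LP1: (BIC), (IR) and (PROB). -/
def LP1Feasible (n : ℕ) (a d : Fin n → ℝ) (u : Finset (Fin n) → ℝ)
    (q : Finset (Fin n) → Fin n → ℝ) : Prop :=
  (∀ S T : Finset (Fin n),
      u S ≥ u T + ∑ i, (vval n a d S i - vval n a d T i) * q T i) ∧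
  (∀ S : Finset (Fin n), 0 ≤ u S) ∧
  (∀ S : Finset (Fin n), ∀ i, 0 ≤ q S i ∧ q S i ≤ 1)

/-- The LP1 objective (expected revenue). -/
def LP1Obj (n : ℕ) (a d p : Fin n → ℝ) (u : Finset (Fin n) → ℝ)
    (q : Finset (Fin n) → Fin n → ℝ) : ℝ :=
  ∑ S : Finset (Fin n), pmass n p S * ((∑ i, vval n a d S i * q S i) - u S)

/-- Item 1 (index 0) has low value 1, high value 2; item 2 (index 1) has low value 1,
high value 3. -/
def aEx : Fin 2 → ℝ := fun _ => 1
def dEx : Fin 2 → ℝ := fun i => if i = 0 then 1 else 2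
noncomputable def pEx : Fin 2 → ℝ := fun _ => 1 / 2

/-- The optimal utility: `u({1,2}) = 1` and `u = 0` elsewhere. -/
def uStar (S : Finset (Fin 2)) : ℝ := if S = Finset.univ then 1 else 0

/-- The optimal allocation rule: `q(∅) = (0,0)`, `q({1}) = (1, 1/2)`,
`q({2}) = (1,1)`, `q({1,2}) = (1,1)`. -/
noncomputable def qStar (S : Finset (Fin 2)) (i : Fin 2) : ℝ :=
  if S = (∅ : Finset (Fin 2)) then 0
  else if S = ({0} : Finset (Fin 2)) then (if i = 0 then 1 else 1 / 2)
  else 1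

/-! The LP is solved by exhibiting an optimal dual solution. Weighting the IR constraint at `∅`,
the nonnegativity of `q(∅)`, the four upward BIC constraints `∅ → {1}, {2}` and
`{1}, {2} → {1,2}`, and five of the constraints `q ≤ 1` by suitable positive multipliers gives
`21/8 - objective` as a nonnegative sum, so `21/8` is an upper bound. By complementary slackness
every weighted constraint is tight at an optimum, and these equalities determine `(u, q)`:
in particular both BIC constraints into `{1,2}` are tight, which forces `u({1,2}) = q_1({2}) = 1`
and then `q_2({1}) = 1/2`. -/

lemma pmass_const (n : ℕ) (c : ℝ) (S : Finset (Fin n)) :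
    pmass n (fun _ => c) S = c ^ #S * (1 - c) ^ #Sᶜ := by
  simp only [pmass, prod_const]

lemma pmass_half (n : ℕ) (S : Finset (Fin n)) : pmass n (fun _ => 1 / 2) S = (1 / 2) ^ n := by
  rw [pmass_const, show (1 : ℝ) - 1 / 2 = 1 / 2 by norm_num, ← pow_add, card_add_card_compl,
    Fintype.card_fin]

lemma sum_vval_sub_vval_mul_of_subset {n : ℕ} (a d q : Fin n → ℝ) {S T : Finset (Fin n)}
    (hTS : T ⊆ S) :
    ∑ i, (vval n a d S i - vval n a d T i) * q i = ∑ i ∈ S \ T, d i * q i := by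
  have hterm : ∀ i, (vval n a d S i - vval n a d T i) * q i =
      if i ∈ S \ T then d i * q i else 0 := by
    intro i
    by_cases hT : i ∈ T
    · simp [vval, hT, hTS hT]
    · by_cases hS : i ∈ S <;> simp [vval, hS, hT]
  simp only [hterm, sum_ite_mem, univ_inter]

lemma LP1Feasible.add_sum_sdiff_le {n : ℕ} {a d : Fin n → ℝ} {u : Finset (Fin n) → ℝ}
    {q : Finset (Fin n) → Fin n → ℝ} (h : LP1Feasible n a d u q) {S T : Finset (Fin n)}
    (hTS : T ⊆ S) : u T + ∑ i ∈ S \ T, d i * q T i ≤ u S := by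
  rw [← sum_vval_sub_vval_mul_of_subset a d (q T) hTS]
  exact h.1 S T

lemma finset_fin_two_cases (S : Finset (Fin 2)) : S = ∅ ∨ S = {0} ∨ S = {1} ∨ S = univ := by
  revert S; decide

lemma sum_finset_fin_two {M : Type*} [AddCommMonoid M] (f : Finset (Fin 2) → M) :
    ∑ S : Finset (Fin 2), f S = f ∅ + f {0} + f {1} + f univ := by
  rw [show (univ : Finset (Finset (Fin 2))) = {∅, {0}, {1}, univ} by decide,
    sum_insert (by decide), sum_insert (by decide), sum_insert (by decide), sum_singleton,
    add_assoc, add_assoc]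

lemma LP1Obj_ex_eq (u : Finset (Fin 2) → ℝ) (q : Finset (Fin 2) → Fin 2 → ℝ) :
    LP1Obj 2 aEx dEx pEx u q =
      ((q ∅ 0 + q ∅ 1 - u ∅) + (2 * q {0} 0 + q {0} 1 - u {0}) +
        (q {1} 0 + 3 * q {1} 1 - u {1}) + (2 * q univ 0 + 3 * q univ 1 - u univ)) / 4 := by
  have hp : pEx = fun _ => 1 / 2 := rfl
  simp only [LP1Obj, hp, pmass_half, sum_finset_fin_two, Fin.sum_univ_two, vval, aEx, dEx]
  norm_num
  ring

/-- The slacks of the LP1 constraints at `(u, q)`, weighted by an optimal dual solution. -/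
noncomputable def dualSlack (u : Finset (Fin 2) → ℝ) (q : Finset (Fin 2) → Fin 2 → ℝ) : ℝ :=
  4 * u ∅ + q ∅ 0 / 2 + 2 * q ∅ 1 +
    3 / 2 * (u {0} - u ∅ - q ∅ 0) + 3 / 2 * (u {1} - u ∅ - 2 * q ∅ 1) +
    1 / 2 * (u univ - u {0} - 2 * q {0} 1) + 1 / 2 * (u univ - u {1} - q {1} 0) +
    2 * (1 - q {0} 0) + 1 / 2 * (1 - q {1} 0) + 3 * (1 - q {1} 1) +
    2 * (1 - q univ 0) + 3 * (1 - q univ 1)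

lemma LP1Obj_ex_eq_sub_dualSlack (u : Finset (Fin 2) → ℝ) (q : Finset (Fin 2) → Fin 2 → ℝ) :
    LP1Obj 2 aEx dEx pEx u q = 21 / 8 - dualSlack u q / 4 := by
  rw [LP1Obj_ex_eq, dualSlack]
  ring

section Feasible

variable {u : Finset (Fin 2) → ℝ} {q : Finset (Fin 2) → Fin 2 → ℝ}

lemma LP1Feasible.ex_dual_constraints (h : LP1Feasible 2 aEx dEx u q) :
    0 ≤ u ∅ ∧ 0 ≤ q ∅ 0 ∧ 0 ≤ q ∅ 1 ∧
      u ∅ + q ∅ 0 ≤ u {0} ∧ u ∅ + 2 * q ∅ 1 ≤ u {1} ∧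
      u {0} + 2 * q {0} 1 ≤ u univ ∧ u {1} + q {1} 0 ≤ u univ ∧
      q {0} 0 ≤ 1 ∧ q {1} 0 ≤ 1 ∧ q {1} 1 ≤ 1 ∧ q univ 0 ≤ 1 ∧ q univ 1 ≤ 1 := by
  have h0 := h.add_sum_sdiff_le (S := {0}) (T := ∅) (by decide)
  have h1 := h.add_sum_sdiff_le (S := {1}) (T := ∅) (by decide)
  have h01 := h.add_sum_sdiff_le (S := univ) (T := {0}) (by decide)
  have h10 := h.add_sum_sdiff_le (S := univ) (T := {1}) (by decide)
  rw [show ({0} : Finset (Fin 2)) \ ∅ = {0} by decide] at h0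
  rw [show ({1} : Finset (Fin 2)) \ ∅ = {1} by decide] at h1
  rw [show (univ : Finset (Fin 2)) \ {0} = {1} by decide] at h01
  rw [show (univ : Finset (Fin 2)) \ {1} = {0} by decide] at h10
  simp only [sum_singleton, dEx] at h0 h1 h01 h10
  norm_num at h0 h1 h01 h10
  obtain ⟨-, hIR, hPROB⟩ := h
  exact ⟨hIR ∅, (hPROB ∅ 0).1, (hPROB ∅ 1).1, h0, h1, h01, h10, (hPROB {0} 0).2,
    (hPROB {1} 0).2, (hPROB {1} 1).2, (hPROB univ 0).2, (hPROB univ 1).2⟩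

lemma dualSlack_nonneg (h : LP1Feasible 2 aEx dEx u q) : 0 ≤ dualSlack u q := by
  obtain ⟨_, _, _, _, _, _, _, _, _, _, _, _⟩ := h.ex_dual_constraints
  unfold dualSlack
  linarith

lemma eq_star_of_dualSlack_eq_zero (h : LP1Feasible 2 aEx dEx u q) (h0 : dualSlack u q = 0) :
    u = uStar ∧ q = qStar := by
  obtain ⟨_, _, _, _, _, _, _, _, _, _, _, _⟩ := h.ex_dual_constraints
  unfold dualSlack at h0
  have hu : u ∅ = 0 ∧ u {0} = 0 ∧ u {1} = 0 ∧ u univ = 1 := by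
    refine ⟨?_, ?_, ?_, ?_⟩ <;> linarith
  have hq : q ∅ 0 = 0 ∧ q ∅ 1 = 0 ∧ q {0} 0 = 1 ∧ q {0} 1 = 1 / 2 ∧
      q {1} 0 = 1 ∧ q {1} 1 = 1 ∧ q univ 0 = 1 ∧ q univ 1 = 1 := by
    refine ⟨?_, ?_, ?_, ?_, ?_, ?_, ?_, ?_⟩ <;> linarith
  constructor
  · funext S
    rcases finset_fin_two_cases S with rfl | rfl | rfl | rfl <;> simp +decide [uStar, hu]
  · funext S i
    rcases finset_fin_two_cases S with rfl | rfl | rfl | rfl <;> fin_cases i <;>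
      simp +decide [qStar, hq]

end Feasible

lemma LP1Feasible_star : LP1Feasible 2 aEx dEx uStar qStar := by
  refine ⟨fun S T => ?_, fun S => ?_, fun S i => ?_⟩
  · rcases finset_fin_two_cases S with rfl | rfl | rfl | rfl <;>
      rcases finset_fin_two_cases T with rfl | rfl | rfl | rfl <;>
      norm_num +decide [vval, uStar, qStar, aEx, dEx, Fin.sum_univ_two]
  · rcases finset_fin_two_cases S with rfl | rfl | rfl | rfl <;> simp +decide [uStar]
  · rcases finset_fin_two_cases S with rfl | rfl | rfl | rfl <;> fin_cases i <;>
      norm_num +decide [qStar]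

lemma dualSlack_star : dualSlack uStar qStar = 0 := by
  simp +decide [dualSlack, uStar, qStar]

theorem stmt_18 :
    LP1Feasible 2 aEx dEx uStar qStar ∧
    LP1Obj 2 aEx dEx pEx uStar qStar = 21 / 8 ∧
    (∀ u q, LP1Feasible 2 aEx dEx u q →
      LP1Obj 2 aEx dEx pEx u q ≤ 21 / 8 ∧
        (LP1Obj 2 aEx dEx pEx u q = 21 / 8 → u = uStar ∧ q = qStar)) ∧
    qStar ({0} : Finset (Fin 2)) 1 = 1 / 2 := by
  refine ⟨LP1Feasible_star, ?_, fun u q h => ⟨?_, fun hopt => ?_⟩, by norm_num [qStar]⟩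
  · rw [LP1Obj_ex_eq_sub_dualSlack, dualSlack_star]
    norm_num
  · rw [LP1Obj_ex_eq_sub_dualSlack]
    linarith [dualSlack_nonneg h]
  · rw [LP1Obj_ex_eq_sub_dualSlack] at hopt
    exact eq_star_of_dualSlack_eq_zero h (by linarith)
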